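/- arXiv:2409.03877 — 6 statements merged into one kernel-verified Lean document; each statement's English description precedes it below -/
import Mathlib

section
/- Let p be a prime, n ≥ 1, and A a commutative ring with no p^n-torsion (i.e. p^n · b = 0 implies b = 0 for b ∈ A). Given a truncated Witt vector x of length n over A and an element a ∈ A such that p^n divides a − ∑_{i=0}^{n−1} p^i (x.coeff i)^{p^{n−i}} in A, there exists a unique truncated Witt vector y of length n+1 over A such that the truncation of y to length n equals x and ∑_{i=0}^{n} p^i (y.coeff i)^{p^{n−i}} = a. (This expresses that W_{n+1}(A) is the pullback of the maps W_n(A) → A/p^n, x ↦ ∑_{i<n} p^i x_i^{p^{n−i}} mod p^n, and the canonical projection A → A/p^n.) -/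
/-- `W_{n+1}(A)` is the pullback of `W_n(A) → A/p^n` and `A → A/p^n`, when `A` has no
`p^n`-torsion: given `x` of length `n` and `a ∈ A` congruent to the appropriate ghost-type
sum modulo `p^n`, there is a unique length-`(n+1)` truncated Witt vector `y` restricting
to `x` and with `∑_{i=0}^{n} p^i (y.coeff i)^{p^(n-i)} = a`. -/
theorem truncatedWittVector_pullback
    (p : ℕ) [hp : Fact p.Prime] (n : ℕ) (hn : 1 ≤ n)
    (A : Type*) [CommRing A]
    (htf : ∀ b : A, (p : A) ^ n * b = 0 → b = 0)
    (x : TruncatedWittVector p n A) (a : A)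
    (hdvd : (p : A) ^ n ∣
      a - ∑ i : Fin n, (p : A) ^ (i : ℕ) * x.coeff i ^ p ^ (n - (i : ℕ))) :
    ∃! y : TruncatedWittVector p (n + 1) A,
      TruncatedWittVector.truncate (Nat.le_succ n) y = x ∧
      ∑ i : Fin (n + 1), (p : A) ^ (i : ℕ) * y.coeff i ^ p ^ (n - (i : ℕ)) = a := by
  obtain ⟨c, hc⟩ := hdvd
  refine ⟨TruncatedWittVector.mk p
      (fun i => if h : (i : ℕ) < n then x.coeff ⟨i, h⟩ else c), ⟨?_, ?_⟩, ?_⟩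
  · ext i
    simp [TruncatedWittVector.coeff_truncate, TruncatedWittVector.coeff_mk, i.is_lt,
      Fin.castLE]
  · rw [Fin.sum_univ_castSucc]
    have h1 : ∀ i : Fin n,
        (TruncatedWittVector.mk p
          (fun i => if h : (i : ℕ) < n then x.coeff ⟨i, h⟩ else c)).coeff i.castSucc
          = x.coeff i := by
      intro i
      simp [TruncatedWittVector.coeff_mk, i.is_lt]
    have h2 : (TruncatedWittVector.mk p
        (fun i => if h : (i : ℕ) < n then x.coeff ⟨i, h⟩ else c)).coeff (Fin.last n) = c := by
      simp [TruncatedWittVector.coeff_mk]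
    simp only [h1, h2, Fin.coe_castSucc, Fin.val_last, Nat.sub_self, pow_zero, pow_one]
    have hS : ∑ i : Fin n, (p : A) ^ (i : ℕ) * x.coeff i ^ p ^ (n - (i : ℕ)) + (p : A) ^ n * c
        = a := by linear_combination -hc
    exact hS
  · rintro z ⟨hzt, hzs⟩
    ext i
    rcases lt_or_ge (i : ℕ) n with h | h
    · have := congrArg (fun w => TruncatedWittVector.coeff ⟨i, h⟩ w) hzt
      simp only [TruncatedWittVector.coeff_truncate] at this
      simpa [TruncatedWittVector.coeff_mk, h, Fin.castLE] using this
    · have hi : i = Fin.last n := by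
        apply Fin.ext
        exact le_antisymm (Nat.lt_succ_iff.mp i.is_lt) h
      subst hi
      have hco : ∀ j : Fin n, z.coeff j.castSucc = x.coeff j := by
        intro j
        have := congrArg (fun w => TruncatedWittVector.coeff j w) hzt
        simp [TruncatedWittVector.coeff_truncate, Fin.castLE] at this
        exact this
      rw [Fin.sum_univ_castSucc] at hzs
      simp only [hco, Fin.coe_castSucc, Fin.val_last, Nat.sub_self, pow_zero, pow_one] at hzs
      have hzs' : ∑ i : Fin n, (p : A) ^ (i : ℕ) * x.coeff i ^ p ^ (n - (i : ℕ))
          + (p : A) ^ n * z.coeff (Fin.last n) = a := hzs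
      have hz : (p : A) ^ n * (z.coeff (Fin.last n) - c) = 0 := by
        linear_combination hzs' + hc
      have := htf _ hz
      simp [TruncatedWittVector.coeff_mk]
      linear_combination this
end

section
/- Let (A, F, V) be a discrete Cartier ring for a prime p such that A is p-torsion-free (p·x = 0 implies x = 0), and let δ : A → A be a function such that F(a) = a^{p} + p·δ(a) for all a ∈ A. Then for all a ∈ A: δ(V(a)) = a − p^{p−2} · V(a^{p}). -/
/-- In a `p`-torsion-free discrete Cartier ring `(A, F, V)` with `δ : A → A` satisfying
`F(a) = a^p + p·δ(a)`, one has `δ(V(a)) = a − p^{p−2} · V(a^{p})`. -/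
theorem cartierRing_delta_verschiebung
    (p : ℕ) (hp : p.Prime) (A : Type*) [CommRing A]
    (F : A →+* A) (V : A →+ A)
    (hproj1 : ∀ a b : A, V (F a * b) = a * V b)
    (hproj2 : ∀ a b : A, V (a * F b) = V a * b)
    (hFV : ∀ a : A, F (V a) = p * a)
    (htf : ∀ x : A, (p : A) * x = 0 → x = 0)
    (δ : A → A) (hδ : ∀ a : A, F a = a ^ p + p * δ a)
    (a : A) :
    δ (V a) = a - (p : A) ^ (p - 2) * V (a ^ p) := by
  have key : ∀ n : ℕ, (V a) ^ (n + 1) = (p : A) ^ n * V (a ^ (n + 1)) := by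
    intro n
    induction n with
    | zero => simp
    | succ k ih =>
      have : (V a) ^ (k + 2) = (V a) ^ (k + 1) * V a := by ring
      rw [this, ih, mul_assoc, ← hproj2 (a ^ (k+1)) (V a), hFV,
        show a ^ (k+1) * ((p:A) * a) = p • (a ^ (k+2)) by
          rw [nsmul_eq_mul]; ring,
        map_nsmul, nsmul_eq_mul]
      ring
  have hp2 : 2 ≤ p := hp.two_le
  have h1 : p - 1 = (p - 2) + 1 := by omega
  have hFVa := hFV (V a) -- unused
  have e1 : (p : A) * a = (V a) ^ p + (p : A) * δ (V a) := by
    rw [← hδ (V a), hFV]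
  have e2 : (V a) ^ p = (p : A) ^ (p - 1) * V (a ^ p) := by
    have := key (p - 1)
    rwa [Nat.sub_add_cancel (by omega)] at this
  have e3 : (p : A) * (δ (V a) - (a - (p : A) ^ (p - 2) * V (a ^ p))) = 0 := by
    rw [e2, h1] at e1
    rw [pow_succ] at e1
    linear_combination -e1
  have := htf _ e3
  linear_combination this
end

section
/- Let (A, F, V) be a discrete Cartier ring for a prime p such that A is p-torsion-free (p·x = 0 implies x = 0), and let δ : A → A be a function such that F(a) = a^{p} + p·δ(a) for all a ∈ A. Then for all n ≥ 1 and all a ∈ A: δ(V^{n}(a)) = V^{n−1}(a) − p^{(p−1)n−1} · V^{n}(a^{p}), where V^m denotes the m-fold iterate of V. -/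
/-- In a `p`-torsion-free discrete Cartier ring `(A, F, V)` with `δ : A → A` satisfying
`F(a) = a^p + p·δ(a)`, one has `δ(V^{n}(a)) = V^{n−1}(a) − p^{(p−1)n−1} · V^{n}(a^{p})`
for all `n ≥ 1`. -/
theorem cartierRing_delta_iterate_verschiebung
    (p : ℕ) (hp : p.Prime) (A : Type*) [CommRing A]
    (F : A →+* A) (V : A →+ A)
    (hproj1 : ∀ a b : A, V (F a * b) = a * V b)
    (hproj2 : ∀ a b : A, V (a * F b) = V a * b)
    (hFV : ∀ a : A, F (V a) = p * a)
    (htf : ∀ x : A, (p : A) * x = 0 → x = 0)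
    (δ : A → A) (hδ : ∀ a : A, F a = a ^ p + p * δ a)
    (n : ℕ) (hn : 1 ≤ n) (a : A) :
    δ ((⇑V)^[n] a) =
      (⇑V)^[n - 1] a - (p : A) ^ ((p - 1) * n - 1) * (⇑V)^[n] (a ^ p) := by
  have hVmul : ∀ (c : ℕ) (x : A), V ((c : A) * x) = (c : A) * V x := by
    intro c x
    have := V.map_nsmul c x
    simpa [nsmul_eq_mul] using this
  have hVpow : ∀ (e : ℕ) (x : A), V ((p : A) ^ e * x) = (p : A) ^ e * V x := by
    intro e x
    have := hVmul (p ^ e) x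
    simpa [Nat.cast_pow] using this
  -- (V x)^k = p^(k-1) * V(x^k) for k ≥ 1
  have key : ∀ k : ℕ, 1 ≤ k → ∀ x : A, (V x) ^ k = (p : A) ^ (k - 1) * V (x ^ k) := by
    intro k hk
    induction k with
    | zero => omega
    | succ m ih =>
      intro x
      rcases Nat.eq_or_lt_of_le hk with h | h
      · simp [← h]
      · have hm : 1 ≤ m := by omega
        have h1 : (V x) ^ (m + 1) = (V x) ^ m * V x := by ring
        rw [h1, ih hm x, mul_assoc, ← hproj2 (x ^ m) (V x), hFV]
        have h2 : x ^ m * ((p : A) * x) = (p : A) * x ^ (m + 1) := by ring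
        rw [h2, hVmul, ← mul_assoc, ← pow_succ]
        rw [Nat.sub_add_cancel hm, Nat.add_sub_cancel]
  -- (V^[n] x)^p = p^((p-1)*n) * V^[n] (x^p)
  have key2 : ∀ m : ℕ, ∀ x : A,
      ((⇑V)^[m] x) ^ p = (p : A) ^ ((p - 1) * m) * (⇑V)^[m] (x ^ p) := by
    intro m
    induction m with
    | zero => intro x; simp
    | succ m ih =>
      intro x
      rw [Function.iterate_succ_apply' V m x, key p hp.one_le, ih x, hVpow,
        Function.iterate_succ_apply' V m (x ^ p), ← mul_assoc, ← pow_add]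
      congr 2
      ring_nf
  obtain ⟨m, rfl⟩ : ∃ m, n = m + 1 := ⟨n - 1, by omega⟩
  have hF : F ((⇑V)^[m + 1] a) = (p : A) * (⇑V)^[m] a := by
    rw [Function.iterate_succ_apply' V m a, hFV]
  have h1 : (p : A) * δ ((⇑V)^[m + 1] a)
      = F ((⇑V)^[m + 1] a) - ((⇑V)^[m + 1] a) ^ p := by
    rw [hδ]; ring
  have hpow : (p - 1) * (m + 1) = ((p - 1) * (m + 1) - 1) + 1 := by
    have h2 := hp.two_le
    have h3 : 0 < (p - 1) * (m + 1) := Nat.mul_pos (by omega) (by omega)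
    omega
  have hz : (p : A) * (δ ((⇑V)^[m + 1] a) -
      ((⇑V)^[m + 1 - 1] a - (p : A) ^ ((p - 1) * (m + 1) - 1) * (⇑V)^[m + 1] (a ^ p))) = 0 := by
    rw [mul_sub, h1, hF, key2, hpow, pow_succ]
    simp only [Nat.add_sub_cancel]
    ring
  have := htf _ hz
  exact sub_eq_zero.mp this
end

section
/- Let p be a prime and A a p-torsion-free commutative ring (p·x = 0 implies x = 0) equipped with a ring endomorphism φ : A →+* A which is a lift of Frobenius, i.e. φ(a) − a^{p} lies in the principal ideal (p) of A for every a ∈ A. Then there exists a unique ring homomorphism s : A →+* W(A) such that for all n ≥ 0 and all a ∈ A, the n-th ghost component of s(a) equals φ^{n}(a) (the n-fold iterate of φ applied to a). In particular, the 0-th Witt coefficient of s(a) is a, so s is a ring-homomorphism section of the projection W(A) → A. -/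
open Finset

namespace WittSectionAux

variable {p : ℕ} [hp : Fact p.Prime] {A : Type*} [CommRing A]

theorem hreg (htf : ∀ x : A, (p : A) * x = 0 → x = 0) :
    ∀ (n : ℕ) (z : A), (p : A) ^ n * z = 0 → z = 0 := by
  intro n
  induction n with
  | zero => intro z hz; simpa using hz
  | succ n ih =>
    intro z hz
    exact htf z (ih (p * z) (by rw [pow_succ, mul_assoc] at hz; exact hz))

/-- Uniqueness of sequences with prescribed partial ghost sums. -/
theorem seq_unique (htf : ∀ x : A, (p : A) * x = 0 → x = 0) {x y : ℕ → A} {n : ℕ}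
    (h : ∀ m ≤ n, ∑ i ∈ range (m + 1), (p : A) ^ i * x i ^ p ^ (m - i)
        = ∑ i ∈ range (m + 1), (p : A) ^ i * y i ^ p ^ (m - i)) :
    ∀ m ≤ n, x m = y m := by
  intro m hm
  induction m using Nat.strong_induction_on with
  | _ m ih =>
    have hn := h m hm
    rw [Finset.sum_range_succ, Finset.sum_range_succ] at hn
    have hsum : ∑ i ∈ range m, (p : A) ^ i * x i ^ p ^ (m - i)
        = ∑ i ∈ range m, (p : A) ^ i * y i ^ p ^ (m - i) :=
      Finset.sum_congr rfl fun i hi => by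
        rw [ih i (mem_range.mp hi) ((le_of_lt (mem_range.mp hi)).trans hm)]
    simp only [Nat.sub_self, pow_zero, pow_one] at hn
    have h2 : (p : A) ^ m * (x m - y m) = 0 := by linear_combination hn - hsum
    exact sub_eq_zero.mp (hreg htf m _ h2)

theorem ghost_inj' (htf : ∀ x : A, (p : A) * x = 0 → x = 0)
    {x y : WittVector p A}
    (h : ∀ n, WittVector.ghostComponent n x = WittVector.ghostComponent n y) : x = y := by
  ext n
  refine seq_unique htf (x := x.coeff) (y := y.coeff) (n := n) ?_ n le_rfl
  intro m _
  have hn := h m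
  rw [WittVector.ghostComponent_apply, WittVector.ghostComponent_apply,
    aeval_wittPolynomial, aeval_wittPolynomial] at hn
  exact hn

/-- Existence of partial coefficient sequences. -/
theorem exists_partial (φ : A →+* A) (hφ : ∀ a : A, φ a - a ^ p ∈ Ideal.span {(p : A)})
    (a : A) (n : ℕ) :
    ∃ x : ℕ → A, ∀ m ≤ n,
      ∑ i ∈ range (m + 1), (p : A) ^ i * x i ^ p ^ (m - i) = (⇑φ)^[m] a := by
  induction n with
  | zero =>
    refine ⟨fun _ => a, ?_⟩
    intro m hm
    interval_cases m
    simp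
  | succ n ih =>
    obtain ⟨x, hx⟩ := ih
    have hdvd : ((p : A) ^ (n + 1)) ∣
        (⇑φ)^[n + 1] a - ∑ i ∈ range (n + 1), (p : A) ^ i * x i ^ p ^ (n + 1 - i) := by
      have h1 : (⇑φ)^[n + 1] a
          = ∑ i ∈ range (n + 1), (p : A) ^ i * (φ (x i)) ^ p ^ (n - i) := by
        rw [Function.iterate_succ_apply', ← hx n le_rfl, map_sum]
        refine Finset.sum_congr rfl fun i _ => ?_
        rw [map_mul, map_pow, map_pow, map_natCast]
      rw [h1, ← Finset.sum_sub_distrib]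
      apply Finset.dvd_sum
      intro i hi
      have hi' : i < n + 1 := mem_range.mp hi
      have hd : (p : A) ∣ φ (x i) - x i ^ p := by
        rw [← Ideal.mem_span_singleton]; exact hφ (x i)
      have hdd := dvd_sub_pow_of_dvd_sub hd (n - i)
      have e : (x i ^ p) ^ p ^ (n - i) = x i ^ p ^ (n + 1 - i) := by
        rw [← pow_mul]
        congr 1
        have h3 : n + 1 - i = (n - i) + 1 := by omega
        rw [h3, pow_succ']
      rw [e] at hdd
      have : (p : A) ^ i * (φ (x i)) ^ p ^ (n - i) - (p : A) ^ i * x i ^ p ^ (n + 1 - i)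
          = (p : A) ^ i * ((φ (x i)) ^ p ^ (n - i) - x i ^ p ^ (n + 1 - i)) := by ring
      rw [this]
      have hsplit : (p : A) ^ (n + 1) = (p : A) ^ i * (p : A) ^ (n - i + 1) := by
        rw [← pow_add]
        congr 1
        omega
      rw [hsplit]
      exact mul_dvd_mul_left _ hdd
    obtain ⟨c, hc⟩ := hdvd
    refine ⟨Function.update x (n + 1) c, ?_⟩
    intro m hm
    rcases Nat.lt_or_ge m (n + 1) with h | h
    · rw [← hx m (by omega)]
      refine Finset.sum_congr rfl fun i hi => ?_
      rw [Function.update_of_ne (by have := mem_range.mp hi; omega)]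
    · have hm' : m = n + 1 := le_antisymm hm h
      subst hm'
      rw [Finset.sum_range_succ]
      have h2 : ∑ i ∈ range (n + 1), (p : A) ^ i * (Function.update x (n + 1) c) i ^ p ^ (n + 1 - i)
          = ∑ i ∈ range (n + 1), (p : A) ^ i * x i ^ p ^ (n + 1 - i) :=
        Finset.sum_congr rfl fun i hi => by
          rw [Function.update_of_ne (by have := mem_range.mp hi; omega)]
      rw [h2, Function.update_self]
      simp only [Nat.sub_self, pow_zero, pow_one]
      linear_combination -hc

/-- Existence of a full coefficient sequence. -/
theorem exists_full (htf : ∀ x : A, (p : A) * x = 0 → x = 0)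
    (φ : A →+* A) (hφ : ∀ a : A, φ a - a ^ p ∈ Ideal.span {(p : A)}) (a : A) :
    ∃ x : ℕ → A, ∀ m : ℕ,
      ∑ i ∈ range (m + 1), (p : A) ^ i * x i ^ p ^ (m - i) = (⇑φ)^[m] a := by
  refine ⟨fun n => (exists_partial φ hφ a n).choose n, ?_⟩
  intro m
  have hm := (exists_partial φ hφ a m).choose_spec
  have heq : ∀ i ≤ m,
      (exists_partial φ hφ a i).choose i = (exists_partial φ hφ a m).choose i := by
    intro i hi
    have hi' := (exists_partial φ hφ a i).choose_spec
    exact seq_unique htf (x := (exists_partial φ hφ a i).choose)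
      (y := (exists_partial φ hφ a m).choose) (n := i)
      (fun k hk => by rw [hi' k hk, hm k (hk.trans hi)]) i le_rfl
  rw [← hm m le_rfl]
  refine Finset.sum_congr rfl fun i hi => ?_
  show (p : A) ^ i * (exists_partial φ hφ a i).choose i ^ p ^ (m - i) = _
  rw [heq i (by have := Finset.mem_range.mp hi; omega)]

end WittSectionAux

/-- For a `p`-torsion-free commutative ring `A` with a Frobenius lift `φ`, there is a unique
ring homomorphism `s : A → W(A)` whose `n`-th ghost component is `φ^[n]`; in particular the
`0`-th Witt coefficient of `s a` is `a`. -/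
theorem wittVector_section_of_frobenius_lift
    (p : ℕ) [hp : Fact p.Prime] (A : Type*) [CommRing A]
    (htf : ∀ x : A, (p : A) * x = 0 → x = 0)
    (φ : A →+* A) (hφ : ∀ a : A, φ a - a ^ p ∈ Ideal.span {(p : A)}) :
    ∃! s : A →+* WittVector p A,
      (∀ (n : ℕ) (a : A), WittVector.ghostComponent n (s a) = (⇑φ)^[n] a) ∧
      (∀ a : A, (s a).coeff 0 = a) := by
  classical
  choose X hX using fun a : A => WittSectionAux.exists_full htf φ hφ a
  have hg : ∀ (n : ℕ) (a : A),
      WittVector.ghostComponent n (WittVector.mk p (X a)) = (⇑φ)^[n] a := by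
    intro n a
    rw [WittVector.ghostComponent_apply, aeval_wittPolynomial, ← hX a n]
    exact Finset.sum_congr rfl fun i _ => by rw [WittVector.coeff_mk]
  refine ⟨{ toFun := fun a => WittVector.mk p (X a)
            map_one' := ?_
            map_mul' := ?_
            map_zero' := ?_
            map_add' := ?_ }, ⟨?_, ?_⟩, ?_⟩
  · exact WittSectionAux.ghost_inj' htf fun n => by
      rw [hg, map_one, iterate_map_one]
  · intro a b
    exact WittSectionAux.ghost_inj' htf fun n => by
      rw [hg, map_mul, hg, hg, iterate_map_mul]
  · exact WittSectionAux.ghost_inj' htf fun n => by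
      rw [hg, map_zero, iterate_map_zero]
  · intro a b
    exact WittSectionAux.ghost_inj' htf fun n => by
      rw [hg, map_add, hg, hg, iterate_map_add]
  · intro n a
    exact hg n a
  · intro a
    have h0 := hX a 0
    simp only [zero_add, Finset.sum_range_one, pow_zero, pow_one, one_mul,
      Function.iterate_zero_apply, Nat.sub_self] at h0
    show (WittVector.mk p (X a)).coeff 0 = a
    rw [WittVector.coeff_mk]
    exact h0
  · intro s' hs'
    refine RingHom.ext fun a => ?_
    refine WittSectionAux.ghost_inj' htf fun n => ?_
    rw [hs'.1 n a]
    exact (hg n a).symm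
end

section
/- Let p be a prime, and let A and B be p-torsion-free commutative rings (p·x = 0 implies x = 0). Let φ : B →+* B be a ring endomorphism lifting Frobenius, i.e. φ(b) − b^{p} lies in the principal ideal (p) of B for all b ∈ B, and let f : B →+* A be any ring homomorphism. Then there exists a unique ring homomorphism g : B →+* W(A) such that (g b).coeff 0 = f(b) for all b ∈ B and g(φ(b)) = frobenius(g(b)) for all b ∈ B. (This is the cofreeness of the Witt vectors among rings with a Frobenius lift, in the p-torsion-free case.) -/
open WittVector Finset

section Aux

variable {p : ℕ} {R : Type*} [CommRing R]

private lemma cancel_pow_p (htf : ∀ x : R, (p : R) * x = 0 → x = 0) :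
    ∀ (n : ℕ) {a b : R}, (p : R) ^ n * a = (p : R) ^ n * b → a = b := by
  intro n
  induction n with
  | zero => intro a b h; simpa using h
  | succ n ih =>
    intro a b h
    have h' : (p : R) ^ n * ((p : R) * a) = (p : R) ^ n * ((p : R) * b) := by
      rw [← mul_assoc, ← mul_assoc, ← pow_succ]
      exact h
    have hz : (p : R) * (a - b) = 0 := by rw [mul_sub, ih h', sub_self]
    exact sub_eq_zero.mp (htf _ hz)

variable [hp : Fact p.Prime]

private lemma ghost_injective (htf : ∀ x : R, (p : R) * x = 0 → x = 0)
    {x y : WittVector p R}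
    (h : ∀ n, WittVector.ghostComponent n x = WittVector.ghostComponent n y) : x = y := by
  ext n
  induction n using Nat.strong_induction_on with
  | _ n ih =>
    have hx := h n
    rw [ghostComponent_apply, aeval_wittPolynomial, ghostComponent_apply,
      aeval_wittPolynomial, Finset.sum_range_succ, Finset.sum_range_succ] at hx
    have hs : ∑ i ∈ range n, (p : R) ^ i * x.coeff i ^ p ^ (n - i)
        = ∑ i ∈ range n, (p : R) ^ i * y.coeff i ^ p ^ (n - i) := by
      refine Finset.sum_congr rfl fun i hi => ?_
      rw [ih i (Finset.mem_range.mp hi)]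
    rw [hs] at hx
    have hx' : (p : R) ^ n * x.coeff n = (p : R) ^ n * y.coeff n := by
      have := add_left_cancel hx
      simpa using this
    exact cancel_pow_p htf n hx'

private lemma ghost_map_naturality {A : Type*} [CommRing A] (f : R →+* A)
    (x : WittVector p R) (n : ℕ) :
    WittVector.ghostComponent n (WittVector.map f x) = f (WittVector.ghostComponent n x) := by
  rw [ghostComponent_apply, aeval_wittPolynomial, ghostComponent_apply, aeval_wittPolynomial]
  rw [map_sum]
  refine Finset.sum_congr rfl fun i _ => ?_
  rw [map_mul, map_pow, map_pow, map_natCast, WittVector.map_coeff]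

open scoped Classical in
/-- The Dwork-style sequence of Witt coordinates for the lift. -/
private noncomputable def dworkSeq (p : ℕ) {B : Type*} [CommRing B] (φ : B →+* B) (b : B) :
    ℕ → B
  | n =>
    if h : ∃ y : B, (p : B) ^ n * y =
        φ^[n] b - ∑ i ∈ (range n).attach,
          (p : B) ^ (i : ℕ) * dworkSeq p φ b i ^ p ^ (n - (i : ℕ)) then
      h.choose
    else 0
  decreasing_by all_goals exact Finset.mem_range.mp i.2

private lemma dworkSeq_spec {B : Type*} [CommRing B]
    (htfB : ∀ x : B, (p : B) * x = 0 → x = 0)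
    (φ : B →+* B) (hφ : ∀ c : B, (p : B) ∣ φ c - c ^ p) (b : B) :
    ∀ n : ℕ, ∑ i ∈ range (n + 1), (p : B) ^ i * dworkSeq p φ b i ^ p ^ (n - i) = φ^[n] b := by
  have key : ∀ n : ℕ,
      ((p : B) ^ n ∣ φ^[n] b - ∑ i ∈ range n, (p : B) ^ i * dworkSeq p φ b i ^ p ^ (n - i)) →
      ∑ i ∈ range (n + 1), (p : B) ^ i * dworkSeq p φ b i ^ p ^ (n - i) = φ^[n] b := by
    intro n hdvd
    obtain ⟨y, hy⟩ := hdvd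
    have hex : ∃ y : B, (p : B) ^ n * y =
        φ^[n] b - ∑ i ∈ (range n).attach,
          (p : B) ^ (i : ℕ) * dworkSeq p φ b i ^ p ^ (n - (i : ℕ)) := by
      refine ⟨y, ?_⟩
      rw [Finset.sum_attach (range n) (fun i => (p : B) ^ i * dworkSeq p φ b i ^ p ^ (n - i))]
      exact hy.symm
    have hval : dworkSeq p φ b n = hex.choose := by
      rw [dworkSeq]; rw [dif_pos hex]
    have hspec := hex.choose_spec
    have hfinal : (p : B) ^ n * dworkSeq p φ b n
        = φ^[n] b - ∑ i ∈ range n, (p : B) ^ i * dworkSeq p φ b i ^ p ^ (n - i) := by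
      rw [hval, hspec,
        Finset.sum_attach (range n) (fun i => (p : B) ^ i * dworkSeq p φ b i ^ p ^ (n - i))]
    rw [Finset.sum_range_succ, Nat.sub_self, pow_zero, pow_one]
    linear_combination hfinal
  intro n
  induction n with
  | zero =>
    apply key
    rw [pow_zero]
    exact one_dvd _
  | succ m ih =>
    apply key
    have hphi : φ^[m + 1] b = ∑ i ∈ range (m + 1),
        (p : B) ^ i * (φ (dworkSeq p φ b i)) ^ p ^ (m - i) := by
      rw [Function.iterate_succ_apply', ← ih, map_sum]
      refine Finset.sum_congr rfl fun i _ => ?_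
      rw [map_mul, map_pow, map_pow, map_natCast]
    rw [hphi, ← Finset.sum_sub_distrib]
    refine Finset.dvd_sum fun i hi => ?_
    have him : i ≤ m := Nat.lt_succ_iff.mp (Finset.mem_range.mp hi)
    have h1 : (p : B) ^ (m - i + 1) ∣
        (φ (dworkSeq p φ b i)) ^ p ^ (m - i) - ((dworkSeq p φ b i) ^ p) ^ p ^ (m - i) :=
      dvd_sub_pow_of_dvd_sub (hφ _) _
    have h2 : ((dworkSeq p φ b i) ^ p) ^ p ^ (m - i) = (dworkSeq p φ b i) ^ p ^ (m + 1 - i) := by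
      rw [show m + 1 - i = m - i + 1 from by omega, pow_succ', pow_mul]
    rw [h2] at h1
    have : (p : B) ^ i * (φ (dworkSeq p φ b i)) ^ p ^ (m - i)
        - (p : B) ^ i * (dworkSeq p φ b i) ^ p ^ (m + 1 - i)
        = (p : B) ^ i * ((φ (dworkSeq p φ b i)) ^ p ^ (m - i)
            - (dworkSeq p φ b i) ^ p ^ (m + 1 - i)) := by ring
    rw [this]
    have hpow : (p : B) ^ (m + 1) = (p : B) ^ i * (p : B) ^ (m - i + 1) := by
      rw [← pow_add, show i + (m - i + 1) = m + 1 from by omega]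
    rw [hpow]
    exact mul_dvd_mul_left _ h1

end Aux

/-- Cofreeness of Witt vectors among rings with a Frobenius lift, in the `p`-torsion-free
case: for `p`-torsion-free rings `A`, `B`, a Frobenius lift `φ` on `B` and a ring map
`f : B → A`, there is a unique ring map `g : B → W(A)` with `(g b).coeff 0 = f b` and
`g ∘ φ = frobenius ∘ g`. -/
theorem wittVector_cofree_of_frobenius_lift
    (p : ℕ) [hp : Fact p.Prime] (A B : Type*) [CommRing A] [CommRing B]
    (htfA : ∀ x : A, (p : A) * x = 0 → x = 0)
    (htfB : ∀ x : B, (p : B) * x = 0 → x = 0)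
    (φ : B →+* B) (hφ : ∀ b : B, φ b - b ^ p ∈ Ideal.span {(p : B)})
    (f : B →+* A) :
    ∃! g : B →+* WittVector p A,
      (∀ b : B, (g b).coeff 0 = f b) ∧
      (∀ b : B, g (φ b) = WittVector.frobenius (g b)) := by
  have hφ' : ∀ c : B, (p : B) ∣ φ c - c ^ p := fun c =>
    Ideal.mem_span_singleton.mp (hφ c)
  -- the candidate map
  set G : B → WittVector p A := fun b => WittVector.map f (WittVector.mk p (dworkSeq p φ b))
    with hG
  have hghostG : ∀ (b : B) (n : ℕ),
      WittVector.ghostComponent n (G b) = f (φ^[n] b) := by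
    intro b n
    rw [hG, ghost_map_naturality, ghostComponent_apply, aeval_wittPolynomial]
    simp only [WittVector.coeff_mk]
    rw [dworkSeq_spec htfB φ hφ' b n]
  -- G is a ring hom, by ghost injectivity
  have hG1 : G 1 = 1 := by
    apply ghost_injective htfA
    intro n
    rw [hghostG, iterate_map_one, map_one, map_one]
  have hGmul : ∀ x y : B, G (x * y) = G x * G y := by
    intro x y
    apply ghost_injective htfA
    intro n
    rw [hghostG, iterate_map_mul, map_mul, map_mul, hghostG, hghostG]
  have hG0 : G 0 = 0 := by
    apply ghost_injective htfA
    intro n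
    rw [hghostG, iterate_map_zero, map_zero, map_zero]
  have hGadd : ∀ x y : B, G (x + y) = G x + G y := by
    intro x y
    apply ghost_injective htfA
    intro n
    rw [hghostG, iterate_map_add, map_add, map_add, hghostG, hghostG]
  set g : B →+* WittVector p A :=
    { toFun := G, map_one' := hG1, map_mul' := hGmul, map_zero' := hG0, map_add' := hGadd }
    with hg
  have hgG : ∀ b, g b = G b := fun b => rfl
  have hcoeff0 : ∀ x : WittVector p A, WittVector.ghostComponent 0 x = x.coeff 0 := by
    intro x
    rw [ghostComponent_apply, aeval_wittPolynomial]
    simp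
  refine ⟨g, ⟨?_, ?_⟩, ?_⟩
  · intro b
    rw [hgG, ← hcoeff0, hghostG]
    simp
  · intro b
    apply ghost_injective htfA
    intro n
    rw [WittVector.ghostComponent_frobenius, hgG, hgG, hghostG, hghostG,
      ← Function.iterate_succ_apply]
  · -- uniqueness
    intro g' ⟨h0, hfr⟩
    have hghost' : ∀ (n : ℕ) (b : B),
        WittVector.ghostComponent n (g' b) = f (φ^[n] b) := by
      intro n
      induction n with
      | zero => intro b; rw [hcoeff0, h0]; simp
      | succ m ih =>
        intro b
        rw [← WittVector.ghostComponent_frobenius, ← hfr, ih,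
          ← Function.iterate_succ_apply]
    refine RingHom.ext fun b => ?_
    apply ghost_injective htfA
    intro n
    rw [hghost' n b, hgG, hghostG]
end

section
/- Let p be a prime and A a p-torsion-free commutative ring (p·x = 0 implies x = 0 in A). Then the ring of p-typical Witt vectors W(A) is also p-torsion-free: if p·x = 0 in W(A) then x = 0. -/
open Finset

/-- If `A` is a `p`-torsion-free commutative ring, then `W(A)` is `p`-torsion-free. -/
theorem wittVector_p_torsion_free
    (p : ℕ) [hp : Fact p.Prime] (A : Type*) [CommRing A]
    (htf : ∀ x : A, (p : A) * x = 0 → x = 0) :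
    ∀ x : WittVector p A, (p : WittVector p A) * x = 0 → x = 0 := by
  have hpow : ∀ (n : ℕ) (x : A), (p : A) ^ n * x = 0 → x = 0 := by
    intro n
    induction n with
    | zero => intro x hx; simpa using hx
    | succ n ih =>
      intro x hx
      exact htf x (ih _ (by rw [← hx]; ring))
  intro x hx
  have hg : ∀ n, WittVector.ghostComponent n x = 0 := by
    intro n
    have h : WittVector.ghostComponent n ((p : WittVector p A) * x) = 0 := by
      rw [hx]; simp
    rw [map_mul, map_natCast] at h
    exact htf _ h
  -- now show all coefficients vanish by strong induction
  have hc : ∀ n, x.coeff n = 0 := by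
    intro n
    induction n using Nat.strong_induction_on with
    | _ n ih =>
      have h := hg n
      rw [WittVector.ghostComponent_apply, aeval_wittPolynomial] at h
      rw [Finset.sum_range_succ] at h
      have hz : ∀ i ∈ range n, (p : A) ^ i * x.coeff i ^ p ^ (n - i) = 0 := by
        intro i hi
        rw [ih i (mem_range.mp hi)]
        rw [zero_pow (pow_ne_zero _ hp.out.ne_zero)]
        ring
      rw [Finset.sum_eq_zero hz, zero_add, Nat.sub_self, pow_zero, pow_one] at h
      exact hpow n _ h
  ext n
  rw [hc n, WittVector.zero_coeff]
end
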